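/- arXiv:2206.14376 — 2 statements merged into one kernel-verified Lean document; each statement's English description precedes it below -/
import Mathlib

section
/- For every 7-uniform hypergraph H with n vertices and m edges, τ(H) ≤ (18400/96050)·(n + m); equivalently the Tuza constant c₇ satisfies c₇ ≤ 18400/96050 < 0.1916. -/
/-!
Deleting a vertex of degree at least `D + 1` lowers `τ` by at most one while removing one vertex
and at least `D + 1` edges, so a bound `τ ≤ a n + b m` with `1 ≤ a + (D + 1) b` survives this
step; it therefore suffices to prove it when every degree is at most `D`. There double counting
gives `k m ≤ D n`, and on that cone a bound already known for all `k`-uniform hypergraphs may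
imply the new one. Four such rounds, starting from `τ ≤ m`, reach `a = b = 18400/96050`.
-/

variable {α : Type*} [DecidableEq α]

/-- A transversal of an edge set: meets every edge. -/
def IsTransversal (E : Finset (Finset α)) (T : Finset α) : Prop :=
  ∀ e ∈ E, (e ∩ T).Nonempty

/-- Transversal number: minimum cardinality of a transversal. -/
noncomputable def tau (E : Finset (Finset α)) : ℕ :=
  sInf {n | ∃ T : Finset α, T.card = n ∧ IsTransversal E T}

/-- Degree of a vertex: number of edges containing it. -/
def degree (E : Finset (Finset α)) (v : α) : ℕ :=
  (E.filter (fun e => v ∈ e)).card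

/-- Neighborhood of a vertex. -/
def nbhd (E : Finset (Finset α)) (v : α) : Finset α :=
  ((E.filter (fun e => v ∈ e)).biUnion id).erase v

theorem tau_le_card_of_isTransversal {E : Finset (Finset α)} {T : Finset α}
    (h : IsTransversal E T) : tau E ≤ T.card :=
  Nat.sInf_le ⟨T, rfl, h⟩

theorem tau_le_card (E : Finset (Finset α)) (hE : ∀ e ∈ E, e.Nonempty) : tau E ≤ E.card := by
  let pick : E → α := fun e => (hE e e.2).choose
  refine (tau_le_card_of_isTransversal (T := E.attach.image pick) fun e he => ?_).trans
    (Finset.card_image_le.trans_eq E.card_attach)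
  exact ⟨pick ⟨e, he⟩, Finset.mem_inter.mpr
    ⟨(hE e he).choose_spec, Finset.mem_image_of_mem _ (Finset.mem_attach _ _)⟩⟩

theorem tau_le_tau_filter_notMem_add_one (E : Finset (Finset α)) (v : α) :
    tau E ≤ tau (E.filter (fun e => v ∉ e)) + 1 := by
  set S := {n | ∃ T : Finset α, T.card = n ∧ IsTransversal (E.filter (fun e => v ∉ e)) T}
  rcases S.eq_empty_or_nonempty with hS | hS
  · -- a transversal of `E` would also be one of the smaller edge set, so `tau E = sInf ∅ = 0`
    suffices {n | ∃ T : Finset α, T.card = n ∧ IsTransversal E T} = ∅ by simp [tau, this]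
    refine Set.eq_empty_of_forall_notMem fun n ⟨T, hT, hET⟩ => ?_
    exact hS.subset ⟨T, hT, fun e he => hET e (Finset.mem_filter.mp he).1⟩
  · obtain ⟨T, hT, hTE⟩ := Nat.sInf_mem hS
    have hvT : IsTransversal E (insert v T) := by
      intro e he
      by_cases hv : v ∈ e
      · exact ⟨v, Finset.mem_inter.mpr ⟨hv, Finset.mem_insert_self _ _⟩⟩
      · obtain ⟨x, hx⟩ := hTE e (Finset.mem_filter.mpr ⟨he, hv⟩)
        exact ⟨x, Finset.inter_subset_inter_left (Finset.subset_insert _ _) hx⟩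
    calc tau E ≤ (insert v T).card := tau_le_card_of_isTransversal hvT
      _ ≤ T.card + 1 := Finset.card_insert_le _ _
      _ = tau (E.filter (fun e => v ∉ e)) + 1 := congrArg (· + 1) hT

theorem degree_add_card_filter_notMem (E : Finset (Finset α)) (v : α) :
    degree E v + (E.filter (fun e => v ∉ e)).card = E.card :=
  Finset.card_filter_add_card_filter_not _

theorem mem_of_degree_pos {V : Finset α} {E : Finset (Finset α)} (hVE : ∀ e ∈ E, e ⊆ V)
    {v : α} (h : 0 < degree E v) : v ∈ V := by
  obtain ⟨e, he⟩ := Finset.card_pos.mp h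
  exact hVE e (Finset.mem_filter.mp he).1 (Finset.mem_filter.mp he).2

theorem card_mul_le_card_mul_of_degree_le {V : Finset α} {E : Finset (Finset α)} {k D : ℕ}
    (hVE : ∀ e ∈ E, e ⊆ V) (hk : ∀ e ∈ E, e.card = k) (hD : ∀ v, degree E v ≤ D) :
    E.card * k ≤ V.card * D := by
  refine Finset.card_mul_le_card_mul (fun e v => v ∈ e) (fun e he => ?_) fun v _ => hD v
  rw [Finset.bipartiteAbove, Finset.filter_mem_eq_inter, Finset.inter_eq_right.mpr (hVE e he),
    hk e he]

variable (α) in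
def TauLinearBound (k : ℕ) (a b : ℚ) : Prop :=
  ∀ (V : Finset α) (E : Finset (Finset α)), (∀ e ∈ E, e ⊆ V) → (∀ e ∈ E, e.card = k) →
    (tau E : ℚ) ≤ a * V.card + b * E.card

theorem tauLinearBound_zero_one {k : ℕ} (hk : 0 < k) : TauLinearBound α k 0 1 := by
  intro V E _ hkE
  have := tau_le_card E fun e he => Finset.card_pos.mp (hkE e he ▸ hk)
  simpa using (Nat.cast_le (α := ℚ)).mpr this

theorem TauLinearBound.of_degree_le {k D : ℕ} {a b : ℚ} (hb : 0 ≤ b)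
    (hab : 1 ≤ a + (D + 1) * b)
    (hlow : ∀ (V : Finset α) (E : Finset (Finset α)), (∀ e ∈ E, e ⊆ V) →
      (∀ e ∈ E, e.card = k) → (∀ v, degree E v ≤ D) → (tau E : ℚ) ≤ a * V.card + b * E.card) :
    TauLinearBound α k a b := by
  intro V
  induction V using Finset.strongInduction with
  | H V ih =>
    intro E hVE hkE
    by_cases hhigh : ∃ v, D + 1 ≤ degree E v
    · obtain ⟨v, hv⟩ := hhigh
      have hvV : v ∈ V := mem_of_degree_pos hVE (by omega)
      have hrest := ih (V.erase v) (Finset.erase_ssubset hvV) (E.filter (fun e => v ∉ e))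
        (fun e he => Finset.subset_erase.mpr
          ⟨hVE e (Finset.mem_filter.mp he).1, (Finset.mem_filter.mp he).2⟩)
        (fun e he => hkE e (Finset.mem_filter.mp he).1)
      have hstep : (tau E : ℚ) ≤ tau (E.filter (fun e => v ∉ e)) + 1 := by
        exact_mod_cast tau_le_tau_filter_notMem_add_one E v
      have hE : (degree E v : ℚ) + (E.filter (fun e => v ∉ e)).card = E.card := by
        exact_mod_cast degree_add_card_filter_notMem E v
      have hV : ((V.erase v).card : ℚ) + 1 = V.card := by
        exact_mod_cast Finset.card_erase_add_one hvV
      have hdeg : (D : ℚ) + 1 ≤ degree E v := by exact_mod_cast hv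
      linarith [mul_le_mul_of_nonneg_left hdeg hb, congrArg (a * ·) hV, congrArg (b * ·) hE]
    · simp only [not_exists, not_le] at hhigh
      exact hlow V E hVE hkE fun v => Nat.lt_succ_iff.mp (hhigh v)

theorem TauLinearBound.bootstrap {k : ℕ} {a' b' a b : ℚ} (D : ℕ)
    (hprev : TauLinearBound α k a' b') (hb : 0 ≤ b) (hab : 1 ≤ a + (D + 1) * b)
    (hcone : ∀ n m : ℚ, 0 ≤ m → m * k ≤ n * D → a' * n + b' * m ≤ a * n + b * m) :
    TauLinearBound α k a b := by
  refine TauLinearBound.of_degree_le hb hab fun V E hVE hkE hD => ?_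
  have hcount : (E.card : ℚ) * k ≤ V.card * D := by
    exact_mod_cast card_mul_le_card_mul_of_degree_le hVE hkE hD
  exact (hprev V E hVE hkE).trans (hcone _ _ (Nat.cast_nonneg _) hcount)

theorem stmt_1 (V : Finset α) (E : Finset (Finset α))
    (hVE : ∀ e ∈ E, e ⊆ V) (huniform : ∀ e ∈ E, e.card = 7) :
    (tau E : ℚ) ≤ (18400 / 96050) * (V.card + E.card) ∧
    (18400 / 96050 : ℚ) < 0.1916 := by
  refine ⟨?_, by norm_num⟩
  have h1 : TauLinearBound α 7 0 1 := tauLinearBound_zero_one (by norm_num)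
  have h2 : TauLinearBound α 7 (9 / 100) (46 / 100) :=
    h1.bootstrap 1 (by norm_num) (by norm_num) fun n m hm h => by push_cast at h; linarith
  have h3 : TauLinearBound α 7 (14 / 100) (29 / 100) :=
    h2.bootstrap 2 (by norm_num) (by norm_num) fun n m hm h => by push_cast at h; linarith
  have h4 : TauLinearBound α 7 (18 / 100) (205 / 1000) :=
    h3.bootstrap 3 (by norm_num) (by norm_num) fun n m hm h => by push_cast at h; linarith
  have h5 : TauLinearBound α 7 (18400 / 96050) (18400 / 96050) :=
    h4.bootstrap 4 (by norm_num) (by norm_num) fun n m hm h => by push_cast at h; linarith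
  simpa only [mul_add] using h5 V E hVE huniform
end

section
/- For every 9-uniform hypergraph H with n vertices and m edges, τ(H) ≤ (1/6)·(n + m). -/
variable {α : Type*} [DecidableEq α]

/-!
Every hypergraph with nonempty edges satisfies the weighted bound
`24 τ(H) ≤ 4 |V| + ∑ₑ w(|e|)`, where `w(k) = max(4, 13 - k, 18 - 2k, 24 - 4k)` is convex and
decreasing; for a 9-uniform hypergraph `w(9) = 4` turns this into `24 τ ≤ 4n + 4m`.

The bound is proved by induction on `|V|`. It suffices to find a reduction: a set `P` of at most
one vertex, taken into the transversal, together with a set `D ⊇ P` of vertices deleted from `V`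
and from the edges not met by `P`, such that the right-hand side (the potential) drops by at
least `24 |P|`.
A vertex whose incident edges weigh at least 20 is taken into the transversal. Otherwise every
vertex is light; an edge of size 1 is then impossible, an edge `{a, b}` has `b` in no other edge
and `P = {a}, D = {a, b}` works, and an edge `{a, b, c}` either has a vertex in no other edge,
which is deleted, or `b` and `c` each lie in at most one further edge, of size at least 6, and
`P = {a}, D = {a, b, c}` works. If all edges have at least 4 vertices, deleting a light vertex `u`
raises the weights of its edges by at most a quarter of their total weight, i.e. by at most 4,
which the term `4 |V|` pays for.
-/

open Finset

theorem IsTransversal.tau_le {E : Finset (Finset α)} {T : Finset α} (h : IsTransversal E T) :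
    tau E ≤ #T :=
  Nat.sInf_le ⟨T, rfl, h⟩

theorem tau_empty : tau (∅ : Finset (Finset α)) = 0 :=
  Nat.eq_zero_of_le_zero (IsTransversal.tau_le (T := ∅) fun _ he => absurd he (notMem_empty _))

theorem exists_isTransversal_card_eq_tau {E : Finset (Finset α)} (hne : ∀ e ∈ E, e.Nonempty) :
    ∃ T, IsTransversal E T ∧ #T = tau E := by
  have hunion : IsTransversal E (E.biUnion id) := fun e he =>
    let ⟨x, hx⟩ := hne e he
    ⟨x, mem_inter.2 ⟨hx, mem_biUnion.2 ⟨e, he, hx⟩⟩⟩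
  obtain ⟨T, hT, hτ⟩ := Nat.sInf_mem (⟨_, _, rfl, hunion⟩ :
    {n | ∃ T : Finset α, #T = n ∧ IsTransversal E T}.Nonempty)
  exact ⟨T, hτ, hT⟩

def residualEdges (P D : Finset α) (E : Finset (Finset α)) : Finset (Finset α) :=
  {g ∈ E | Disjoint P g}.image (· \ D)

theorem tau_le_tau_residualEdges_add {P D : Finset α} {E : Finset (Finset α)}
    (hne : ∀ g ∈ E, Disjoint P g → (g \ D).Nonempty) :
    tau E ≤ tau (residualEdges P D E) + #P := by
  obtain ⟨T, hT, hTcard⟩ := exists_isTransversal_card_eq_tau (E := residualEdges P D E) <| by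
    simp only [residualEdges, mem_image, mem_filter]
    rintro _ ⟨g, ⟨hg, hP⟩, rfl⟩
    exact hne g hg hP
  have hcover : IsTransversal E (T ∪ P) := by
    intro g hg
    by_cases hP : Disjoint P g
    · obtain ⟨x, hx⟩ := hT (g \ D) (mem_image_of_mem _ (mem_filter.2 ⟨hg, hP⟩))
      rw [mem_inter, mem_sdiff] at hx
      exact ⟨x, mem_inter.2 ⟨hx.1.1, mem_union_left _ hx.2⟩⟩
    · obtain ⟨x, hxP, hxg⟩ := not_disjoint_iff.1 hP
      exact ⟨x, mem_inter.2 ⟨hxg, mem_union_right _ hxP⟩⟩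
  exact hTcard ▸ hcover.tau_le.trans (card_union_le _ _)

/-- Takes the values `24, 20, 16, 12, 10, 8, 7, 6, 5, 4, 4, …`. -/
def weight (k : ℕ) : ℕ := max 4 (max (13 - k) (max (18 - 2 * k) (24 - 4 * k)))

theorem four_le_weight (k : ℕ) : 4 ≤ weight k := le_max_left _ _

theorem weight_sub_one_le (k : ℕ) (hk : 4 ≤ k) : 4 * weight (k - 1) ≤ 5 * weight k := by
  unfold weight; omega

theorem weight_sub_le (k j : ℕ) (hk : 6 ≤ k) (hj : j ≤ 3) : weight (k - j) ≤ weight k + 2 * j := by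
  unfold weight; omega

theorem six_le_of_weight_lt_eight {k : ℕ} (h : weight k < 8) : 6 ≤ k := by
  unfold weight at h; omega

section WeightSums

variable {ι : Type*} (F : Finset ι) (f : ι → ℕ)

theorem four_mul_card_le_sum_weight : 4 * #F ≤ ∑ i ∈ F, weight (f i) := by
  simpa [mul_comm] using card_nsmul_le_sum F (fun i => weight (f i)) 4 fun i _ => four_le_weight _

theorem weight_add_weight_le_sum [DecidableEq ι] {i j : ι} (hi : i ∈ F) (hj : j ∈ F) (hij : i ≠ j) :
    weight (f i) + weight (f j) ≤ ∑ k ∈ F, weight (f k) := by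
  have := sum_le_sum_of_subset (f := fun k => weight (f k))
    (insert_subset hi (singleton_subset_iff.2 hj))
  rwa [sum_pair hij] at this

theorem eq_of_sum_weight_lt [DecidableEq ι] {i j : ι} (hi : i ∈ F) (hj : j ∈ F)
    (h : ∑ k ∈ F, weight (f k) < weight (f i) + 4) : j = i := by
  by_contra hji
  have := weight_add_weight_le_sum F f hi hj (Ne.symm hji)
  have := four_le_weight (f j)
  omega

theorem card_le_one_of_sum_weight_lt_eight (h : ∑ i ∈ F, weight (f i) < 8) :
    #F ≤ 1 ∧ ∀ i ∈ F, 6 ≤ f i := by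
  refine ⟨by have := four_mul_card_le_sum_weight F f; omega, fun i hi => ?_⟩
  exact six_le_of_weight_lt_eight ((single_le_sum (fun _ _ => Nat.zero_le _) hi).trans_lt h)

end WeightSums

def potential (V : Finset α) (E : Finset (Finset α)) : ℕ := 4 * #V + ∑ e ∈ E, weight #e

theorem potential_residualEdges_add_le {V P D : Finset α} {E : Finset (Finset α)} (hDV : D ⊆ V) :
    potential (V \ D) (residualEdges P D E) + 4 * #D ≤
      4 * #V + ∑ g ∈ E with Disjoint P g, weight #(g \ D) := by
  have hV := card_sdiff_add_card_eq_card hDV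
  have hsum : ∑ g ∈ residualEdges P D E, weight #g ≤ ∑ g ∈ E with Disjoint P g, weight #(g \ D) :=
    sum_image_le_of_nonneg fun _ _ => Nat.zero_le _
  unfold potential
  omega

/-- Taking `P` into the transversal and deleting `D` from `V` and from the edges missed by `P`
lowers the potential by at least `24 |P|`. -/
structure IsReduction (V : Finset α) (E : Finset (Finset α)) (P D : Finset α) : Prop where
  subset : D ⊆ V
  nonempty : D.Nonempty
  residual_nonempty : ∀ g ∈ E, Disjoint P g → (g \ D).Nonempty
  cost : 24 * #P + ∑ g ∈ E with Disjoint P g, weight #(g \ D) ≤ 4 * #D + ∑ g ∈ E, weight #g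

section Reductions

variable {V : Finset α} {E : Finset (Finset α)}

theorem isReduction_pick {a : α} {D : Finset α} (ha : a ∈ D) (hDV : D ⊆ V)
    (hres : ∀ g ∈ E, a ∉ g → (g \ D).Nonempty) (pen : ℕ)
    (hpen : ∑ g ∈ E with a ∉ g, weight #(g \ D) ≤ ∑ g ∈ E with a ∉ g, weight #g + pen)
    (hgain : 24 + pen ≤ 4 * #D + ∑ g ∈ E with a ∈ g, weight #g) :
    IsReduction V E {a} D where
  subset := hDV
  nonempty := ⟨a, ha⟩
  residual_nonempty g hg hP := hres g hg (disjoint_singleton_left.1 hP)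
  cost := by
    simp only [disjoint_singleton_left, card_singleton]
    have := sum_filter_add_sum_filter_not E (a ∈ ·) (fun g => weight #g)
    omega

theorem isReduction_of_heavy (hne : ∀ e ∈ E, e.Nonempty) {v : α} (hv : v ∈ V)
    (hheavy : 20 ≤ ∑ g ∈ E with v ∈ g, weight #g) : IsReduction V E {v} {v} := by
  have hsdiff : ∀ g : Finset α, v ∉ g → g \ {v} = g := fun g hvg =>
    sdiff_eq_self_of_disjoint (disjoint_singleton_right.2 hvg)
  refine isReduction_pick (mem_singleton_self v) (singleton_subset_iff.2 hv)
    (fun g hg hvg => by rw [hsdiff g hvg]; exact hne g hg) 0 ?_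
    (by simp only [card_singleton]; omega)
  exact (sum_congr rfl fun g hg => by rw [hsdiff g (mem_filter.1 hg).2]).le

theorem isReduction_erase (hne : ∀ e ∈ E, e.Nonempty) {u : α} (hu : u ∈ V)
    (htwo : ∀ g ∈ E, u ∈ g → 2 ≤ #g)
    (hpen : ∑ g ∈ E with u ∈ g, weight (#g - 1) ≤ ∑ g ∈ E with u ∈ g, weight #g + 4) :
    IsReduction V E ∅ {u} where
  subset := singleton_subset_iff.2 hu
  nonempty := singleton_nonempty u
  residual_nonempty g hg _ := by
    by_cases hug : u ∈ g
    · rw [← card_pos, sdiff_singleton_eq_erase, card_erase_of_mem hug]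
      have := htwo g hg hug
      omega
    · rw [sdiff_eq_self_of_disjoint (disjoint_singleton_right.2 hug)]
      exact hne g hg
  cost := by
    simp only [disjoint_empty_left, filter_true_of_mem fun _ _ => trivial, card_empty,
      card_singleton]
    rw [← sum_filter_add_sum_filter_not E (u ∈ ·), ← sum_filter_add_sum_filter_not E (u ∈ ·)]
    have hin : ∑ g ∈ E with u ∈ g, weight #(g \ {u}) = ∑ g ∈ E with u ∈ g, weight (#g - 1) :=
      sum_congr rfl fun g hg => by
        rw [sdiff_singleton_eq_erase, card_erase_of_mem (mem_filter.1 hg).2]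
    have hout : ∑ g ∈ E with u ∉ g, weight #(g \ {u}) = ∑ g ∈ E with u ∉ g, weight #g :=
      sum_congr rfl fun g hg => by
        rw [sdiff_eq_self_of_disjoint (disjoint_singleton_right.2 (mem_filter.1 hg).2)]
    omega

theorem isReduction_pair (hsub : ∀ e ∈ E, e ⊆ V) (hne : ∀ e ∈ E, e.Nonempty) {a b : α}
    (hab : a ≠ b) (he : {a, b} ∈ E) (hb : ∀ g ∈ E, b ∈ g → g = {a, b}) :
    IsReduction V E {a} {a, b} := by
  have hsdiff : ∀ g ∈ E, a ∉ g → g \ {a, b} = g := fun g hg hag => by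
    refine sdiff_eq_self_of_disjoint (disjoint_left.2 fun x hxg hx => hag ?_)
    rcases mem_insert.1 hx with rfl | hx
    · exact hxg
    · rw [hb g hg (mem_singleton.1 hx ▸ hxg)]
      exact mem_insert_self a {b}
  refine isReduction_pick (mem_insert_self a {b}) (hsub _ he)
    (fun g hg hag => by rw [hsdiff g hg hag]; exact hne g hg) 0
    (sum_congr rfl fun g hg => by rw [hsdiff g (mem_filter.1 hg).1 (mem_filter.1 hg).2]).le ?_
  have hWe : weight #({a, b} : Finset α) ≤ ∑ g ∈ E with a ∈ g, weight #g :=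
    single_le_sum (f := fun g => weight #g) (fun _ _ => Nat.zero_le _)
      (mem_filter.2 ⟨he, mem_insert_self a {b}⟩)
  rw [card_pair hab] at hWe ⊢
  exact (by decide : 24 + 0 ≤ 4 * 2 + weight 2).trans (Nat.add_le_add_left hWe _)

theorem sum_weight_sdiff_le {G : Finset (Finset α)} {S : Finset α} (hS : #S ≤ 3)
    (hlarge : ∀ g ∈ G, (S ∩ g).Nonempty → 6 ≤ #g) :
    ∑ g ∈ G, weight #(g \ S) ≤ ∑ g ∈ G, weight #g + 2 * ∑ g ∈ G, #(S ∩ g) := by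
  rw [mul_sum, ← sum_add_distrib]
  refine sum_le_sum fun g hg => ?_
  rw [card_sdiff]
  rcases (S ∩ g).eq_empty_or_nonempty with h | h
  · simp [h]
  · exact weight_sub_le _ _ (hlarge g hg h) ((card_le_card inter_subset_left).trans hS)

theorem isReduction_triple (hsub : ∀ e ∈ E, e ⊆ V) (hne : ∀ e ∈ E, e.Nonempty) {a b c : α}
    (hab : a ≠ b) (hac : a ≠ c) (hbc : b ≠ c) (he : {a, b, c} ∈ E)
    (ha : ∃ f ∈ E, a ∈ f ∧ f ≠ {a, b, c})
    (hlight : ∀ x ∈ ({b, c} : Finset α), ∑ g ∈ E with x ∈ g, weight #g < 20) :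
    IsReduction V E {a} {a, b, c} := by
  have he3 : #({a, b, c} : Finset α) = 3 := card_eq_three.2 ⟨a, b, c, hab, hac, hbc, rfl⟩
  have hWe : weight #({a, b, c} : Finset α) = 12 := by rw [he3]; rfl
  set G := {g ∈ E | a ∉ g}
  have hsparse : ∀ x ∈ ({b, c} : Finset α),
      #{g ∈ G | x ∈ g} ≤ 1 ∧ ∀ g ∈ {g ∈ G | x ∈ g}, 6 ≤ #g := by
    intro x hx
    have hxe : {a, b, c} ∈ {g ∈ E | x ∈ g} := mem_filter.2 ⟨he, mem_insert_of_mem hx⟩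
    have hsplit := add_sum_erase _ (fun g => weight #g) hxe
    have hle : ∑ g ∈ {g ∈ G | x ∈ g}, weight #g ≤
        ∑ g ∈ {g ∈ E | x ∈ g}.erase {a, b, c}, weight #g := by
      refine sum_le_sum_of_subset fun g hg => ?_
      simp only [G, mem_filter] at hg
      refine mem_erase.2 ⟨?_, mem_filter.2 ⟨hg.1.1, hg.2⟩⟩
      rintro rfl
      exact hg.1.2 (mem_insert_self _ _)
    have := hlight x hx
    exact card_le_one_of_sum_weight_lt_eight _ _ (by omega)
  have hlarge : ∀ g ∈ G, ({b, c} ∩ g).Nonempty → 6 ≤ #g := by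
    rintro g hg ⟨x, hx⟩
    rw [mem_inter] at hx
    exact (hsparse x hx.1).2 g (mem_filter.2 ⟨hg, hx.2⟩)
  have hsdiff : ∀ g ∈ G, g \ {a, b, c} = g \ {b, c} := fun g hg =>
    sdiff_insert_of_notMem (mem_filter.1 hg).2 _
  refine isReduction_pick (mem_insert_self a {b, c}) (hsub _ he) (fun g hg hag => ?_) 4 ?_ ?_
  · have hgG : g ∈ G := mem_filter.2 ⟨hg, hag⟩
    rw [hsdiff g hgG, sdiff_nonempty]
    intro hgbc
    have := hlarge g hgG (by rw [inter_eq_right.2 hgbc]; exact hne g hg)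
    have := card_le_card hgbc
    have := card_le_two (a := b) (b := c)
    omega
  · have hincidences : ∑ g ∈ G, #({b, c} ∩ g) ≤ 2 :=
      (sum_card_inter_le (n := 1) fun x hx => (hsparse x hx).1).trans (by simpa using card_le_two)
    calc ∑ g ∈ G, weight #(g \ {a, b, c}) = ∑ g ∈ G, weight #(g \ {b, c}) :=
          sum_congr rfl fun g hg => by rw [hsdiff g hg]
      _ ≤ ∑ g ∈ G, weight #g + 2 * ∑ g ∈ G, #({b, c} ∩ g) :=
          sum_weight_sdiff_le (card_le_two.trans (by norm_num)) hlarge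
      _ ≤ ∑ g ∈ G, weight #g + 4 := by omega
  · obtain ⟨f, hf, haf, hfe⟩ := ha
    have htwo := weight_add_weight_le_sum {g ∈ E | a ∈ g} (fun g => #g)
      (mem_filter.2 ⟨he, mem_insert_self a {b, c}⟩) (mem_filter.2 ⟨hf, haf⟩) hfe.symm
    have := four_le_weight #f
    omega

theorem isReduction_erase_of_light (hne : ∀ e ∈ E, e.Nonempty) {u : α} (hu : u ∈ V)
    (hfour : ∀ g ∈ E, u ∈ g → 4 ≤ #g) (hlight : ∑ g ∈ E with u ∈ g, weight #g < 20) :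
    IsReduction V E ∅ {u} := by
  refine isReduction_erase hne hu (fun g hg hug => (hfour g hg hug).trans' (by norm_num)) ?_
  have hquarter : 4 * ∑ g ∈ E with u ∈ g, weight (#g - 1) ≤ 5 * ∑ g ∈ E with u ∈ g, weight #g := by
    rw [mul_sum, mul_sum]
    refine sum_le_sum fun g hg => weight_sub_one_le _ ?_
    exact hfour g (mem_filter.1 hg).1 (mem_filter.1 hg).2
  omega

theorem exists_isReduction_of_card_le_three (hsub : ∀ e ∈ E, e ⊆ V) (hne : ∀ e ∈ E, e.Nonempty)
    (hlight : ∀ v ∈ V, ∑ g ∈ E with v ∈ g, weight #g < 20) {e : Finset α} (he : e ∈ E)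
    (he3 : #e ≤ 3) : ∃ P D, IsReduction V E P D := by
  have hlight' : ∀ x ∈ e, ∑ g ∈ E with x ∈ g, weight #g < 20 := fun x hx =>
    hlight x (hsub e he hx)
  obtain h1 | h2 | h3 : #e = 1 ∨ #e = 2 ∨ #e = 3 := by
    have := card_pos.2 (hne e he)
    omega
  · obtain ⟨a, rfl⟩ := card_eq_one.1 h1
    have hW := single_le_sum (f := fun g => weight #g) (fun _ _ => Nat.zero_le _)
      (mem_filter.2 ⟨he, mem_singleton_self a⟩ : {a} ∈ {g ∈ E | a ∈ g})
    have := hlight' a (mem_singleton_self a)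
    simp only [card_singleton] at hW
    exact absurd (hW.trans_lt this) (by decide)
  · obtain ⟨a, b, hab, rfl⟩ := card_eq_two.1 h2
    have hb : b ∈ ({a, b} : Finset α) := mem_insert_of_mem (mem_singleton_self b)
    refine ⟨_, _, isReduction_pair hsub hne hab he fun g hg hbg => ?_⟩
    exact eq_of_sum_weight_lt {g ∈ E | b ∈ g} (fun g => #g) (mem_filter.2 ⟨he, hb⟩)
      (mem_filter.2 ⟨hg, hbg⟩) ((hlight' b hb).trans_le (by rw [h2]; decide))
  · obtain ⟨a, b, c, hab, hac, hbc, rfl⟩ := card_eq_three.1 h3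
    by_cases hexcl : ∃ u ∈ ({a, b, c} : Finset α), ∀ g ∈ E, u ∈ g → g = {a, b, c}
    · obtain ⟨u, hue, hu⟩ := hexcl
      have hstar : {g ∈ E | u ∈ g} = {{a, b, c}} :=
        eq_singleton_iff_unique_mem.2 ⟨mem_filter.2 ⟨he, hue⟩,
          fun g hg => hu g (mem_filter.1 hg).1 (mem_filter.1 hg).2⟩
      refine ⟨_, _, isReduction_erase hne (hsub _ he hue) (fun g hg hug => ?_) ?_⟩
      · rw [hu g hg hug, h3]
        omega
      · rw [hstar, sum_singleton, sum_singleton, h3]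
        decide
    · push Not at hexcl
      obtain ⟨f, hf, haf, hfe⟩ := hexcl a (mem_insert_self a {b, c})
      exact ⟨_, _, isReduction_triple hsub hne hab hac hbc he ⟨f, hf, haf, hfe⟩
        fun x hx => hlight' x (mem_insert_of_mem hx)⟩

theorem exists_isReduction (hsub : ∀ e ∈ E, e ⊆ V) (hne : ∀ e ∈ E, e.Nonempty)
    (hE : E.Nonempty) : ∃ P D, IsReduction V E P D := by
  by_cases hheavy : ∃ v ∈ V, 20 ≤ ∑ g ∈ E with v ∈ g, weight #g
  · obtain ⟨v, hv, h⟩ := hheavy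
    exact ⟨_, _, isReduction_of_heavy hne hv h⟩
  push Not at hheavy
  by_cases hsmall : ∃ e ∈ E, #e ≤ 3
  · obtain ⟨e, he, he3⟩ := hsmall
    exact exists_isReduction_of_card_le_three hsub hne hheavy he he3
  push Not at hsmall
  obtain ⟨e, he⟩ := hE
  obtain ⟨u, hu⟩ := hne e he
  exact ⟨_, _, isReduction_erase_of_light hne (hsub e he hu) (fun g hg _ => hsmall g hg)
    (hheavy u (hsub e he hu))⟩

end Reductions

theorem twentyfour_mul_tau_le_potential (V : Finset α) (E : Finset (Finset α))
    (hsub : ∀ e ∈ E, e ⊆ V) (hne : ∀ e ∈ E, e.Nonempty) :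
    24 * tau E ≤ potential V E := by
  induction hV : #V using Nat.strong_induction_on generalizing V E with
  | _ n ih =>
  subst hV
  rcases E.eq_empty_or_nonempty with rfl | hE
  · simp [tau_empty]
  obtain ⟨P, D, hred⟩ := exists_isReduction hsub hne hE
  have hτ := tau_le_tau_residualEdges_add hred.residual_nonempty
  have hpot := potential_residualEdges_add_le (P := P) (E := E) hred.subset
  have hind := ih _ (card_lt_card (sdiff_ssubset hred.subset hred.nonempty)) (V \ D)
    (residualEdges P D E) ?_ ?_ rfl
  · have := hred.cost
    unfold potential
    omega
  · simp only [residualEdges, mem_image, mem_filter]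
    rintro _ ⟨g, ⟨hg, -⟩, rfl⟩
    exact sdiff_subset_sdiff (hsub g hg) subset_rfl
  · simp only [residualEdges, mem_image, mem_filter]
    rintro _ ⟨g, ⟨hg, hP⟩, rfl⟩
    exact hred.residual_nonempty g hg hP

theorem stmt_2 (V : Finset α) (E : Finset (Finset α))
    (hVE : ∀ e ∈ E, e ⊆ V) (huniform : ∀ e ∈ E, e.card = 9) :
    (tau E : ℚ) ≤ (1 / 6) * (V.card + E.card) := by
  have hne : ∀ e ∈ E, e.Nonempty := fun e he => card_pos.1 (by rw [huniform e he]; norm_num)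
  have hpot : potential V E = 4 * #V + 4 * #E := by
    rw [potential, sum_congr rfl fun e he => by rw [huniform e he], sum_const, smul_eq_mul,
      show weight 9 = 4 from rfl, mul_comm #E]
  have h := twentyfour_mul_tau_le_potential V E hVE hne
  rw [hpot] at h
  have : (6 * tau E : ℚ) ≤ V.card + E.card := by exact_mod_cast (by omega : 6 * tau E ≤ #V + #E)
  linarith
end
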